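/- Fix s ∈ ℕ and let γ: ℕ_0 → V be a path on a finite simple connected graph G = (V,E) (i.e., consecutive values are equal or adjacent). Define the ghost-index sets G^{γ,s}(n) recursively by G^{γ,s}(0) = ∅ and G^{γ,s}(n) = G^{γ,s}(n−1) ∪ {m ∈ [0,n−1] \ G^{γ,s}(n−1) : m satisfies condition (G_n)}, where (G_n) requires γ(n) ∈ R^γ([n−s+1, m] \ G^{γ,s}(n−1)) and, with m_1 the largest non-ghost index h ∈ [n−s+1, m] with γ(h) = γ(n), that γ(k) ∉ R^γ([0,k−1] \ G^{γ,s}(n−1)) for all non-ghost k ∈ [m_1, n−1]. Let Skel^{γ,s}(n) be the subgraph of the Aldous–Broder tree AB^γ(n) induced on the vertex set R^γ([0,n] \ G^{γ,s}(n)), rooted at γ(n). Then for every n ∈ ℕ_0, Skel^{γ,s}(n) is connected, hence a rooted subtree of AB^γ(n). -/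
import Mathlib


open Finset

variable {V : Type*} [Fintype V] [DecidableEq V] [Nonempty V]

/-- One-step transition kernel of the lazy random walk on `G`:
stay put with probability `1/2`, otherwise move to a uniformly chosen neighbour. -/
noncomputable def lazyStep (G : SimpleGraph V) [DecidableRel G.Adj] (x y : V) : ℝ :=
  if x = y then 1 / 2 else if G.Adj x y then 1 / (2 * (G.degree x : ℝ)) else 0

/-- `n`-step transition probabilities of the lazy random walk. -/
noncomputable def lazyProb (G : SimpleGraph V) [DecidableRel G.Adj] : ℕ → V → V → ℝ
  | 0, x, y => if x = y then 1 else 0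
  | n + 1, x, y => ∑ z : V, lazyStep G x z * lazyProb G n z y

/-- The stationary (degree-biased) distribution `π(x) = deg(x)/(2#E)`. -/
noncomputable def statDist (G : SimpleGraph V) [DecidableRel G.Adj] (x : V) : ℝ :=
  (G.degree x : ℝ) / (2 * (G.edgeFinset.card : ℝ))

/-- The uniform `(ℓ∞, 1/4)` mixing time. -/
noncomputable def tmix (G : SimpleGraph V) [DecidableRel G.Adj] : ℕ :=
  sInf {n : ℕ | ∀ x y : V, |lazyProb G n x y / statDist G y - 1| ≤ 1 / 4}

/-- Extension of a finite path to all of `ℕ` (constant after time `N`). -/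
def extPath (N : ℕ) (γ : Fin (N + 1) → V) : ℕ → V :=
  fun n => γ ⟨min n N, Nat.lt_succ_of_le (min_le_right n N)⟩

/-- Weight of a finite path under the lazy random walk kernel. -/
noncomputable def pathWeight (G : SimpleGraph V) [DecidableRel G.Adj]
    (N : ℕ) (γ : Fin (N + 1) → V) : ℝ :=
  ∏ i ∈ Finset.range N, lazyStep G (extPath N γ i) (extPath N γ (i + 1))

open Classical in
/-- Probability, for the lazy random walk started at `ρ`, of a path event
depending only on the first `N+1` coordinates. -/
noncomputable def walkProb (G : SimpleGraph V) [DecidableRel G.Adj]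
    (ρ : V) (N : ℕ) (E : (ℕ → V) → Prop) : ℝ :=
  ∑ γ : Fin (N + 1) → V,
    if extPath N γ 0 = ρ ∧ E (extPath N γ) then pathWeight G N γ else 0

open Classical in
/-- Expectation, for the lazy random walk started at `ρ`, of a path functional
depending only on the first `N+1` coordinates. -/
noncomputable def walkExp (G : SimpleGraph V) [DecidableRel G.Adj]
    (ρ : V) (N : ℕ) (f : (ℕ → V) → ℝ) : ℝ :=
  ∑ γ : Fin (N + 1) → V,
    if extPath N γ 0 = ρ then pathWeight G N γ * f (extPath N γ) else 0

open Classical in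
/-- Probability of a path event for the lazy random walk started from `π`. -/
noncomputable def walkProbStat (G : SimpleGraph V) [DecidableRel G.Adj]
    (N : ℕ) (E : (ℕ → V) → Prop) : ℝ :=
  ∑ γ : Fin (N + 1) → V,
    if E (extPath N γ) then statDist G (extPath N γ 0) * pathWeight G N γ else 0

/-- Expectation of a path functional for the lazy random walk started from `π`. -/
noncomputable def walkExpStat (G : SimpleGraph V) [DecidableRel G.Adj]
    (N : ℕ) (f : (ℕ → V) → ℝ) : ℝ :=
  ∑ γ : Fin (N + 1) → V,
    statDist G (extPath N γ 0) * pathWeight G N γ * f (extPath N γ)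

open Classical in
/-- Probability of a joint event for two independent lazy random walks,
each started from the stationary distribution. -/
noncomputable def twoWalkProbStat (G : SimpleGraph V) [DecidableRel G.Adj]
    (N : ℕ) (E : (ℕ → V) → (ℕ → V) → Prop) : ℝ :=
  ∑ γ₁ : Fin (N + 1) → V, ∑ γ₂ : Fin (N + 1) → V,
    if E (extPath N γ₁) (extPath N γ₂) then
      (statDist G (extPath N γ₁ 0) * pathWeight G N γ₁) *
      (statDist G (extPath N γ₂ 0) * pathWeight G N γ₂) else 0

open Classical in
/-- Probability of a joint event for two independent lazy random walks,
both started at the vertex `ρ`. -/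
noncomputable def twoWalkProbFrom (G : SimpleGraph V) [DecidableRel G.Adj]
    (ρ : V) (N : ℕ) (E : (ℕ → V) → (ℕ → V) → Prop) : ℝ :=
  ∑ γ₁ : Fin (N + 1) → V, ∑ γ₂ : Fin (N + 1) → V,
    if extPath N γ₁ 0 = ρ ∧ extPath N γ₂ 0 = ρ ∧ E (extPath N γ₁) (extPath N γ₂) then
      pathWeight G N γ₁ * pathWeight G N γ₂ else 0

/-- Range of a path over a finite set of times. -/
def walkRange (w : ℕ → V) (A : Finset ℕ) : Finset V := A.image w

/-- `q̄^G(s)`: averaged intersection probability of two independent lazy walks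
started at the same (uniform) vertex. -/
noncomputable def qbar (G : SimpleGraph V) [DecidableRel G.Adj] (s : ℕ) : ℝ :=
  (1 / (Fintype.card V : ℝ)) * ∑ ρ : V,
    twoWalkProbFrom G ρ s (fun w₁ w₂ =>
      (walkRange w₁ (Finset.Icc 0 s) ∩ walkRange w₂ (Finset.Icc 1 s)).Nonempty)

/-- `H^W_ρ(m) = Σ_{i=0}^m Σ_{j=0}^m P_ρ(W(i+j)=ρ)`. -/
noncomputable def HW (G : SimpleGraph V) [DecidableRel G.Adj] (ρ : V) (m : ℕ) : ℝ :=
  ∑ i ∈ Finset.range (m + 1), ∑ j ∈ Finset.range (m + 1), lazyProb G (i + j) ρ ρ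

open Classical in
/-- Condition `(G_n)` from the definition of the ghost-index chain: the index `m`
(not yet a ghost index, `Gp` being the previous ghost set) closes a loop of length
less than `s` at time `n`, and no non-ghost index between the matching time `m₁`
and `n-1` closes a loop with an earlier non-ghost index. -/
noncomputable def ghostCond (w : ℕ → V) (s n m : ℕ) (Gp : Finset ℕ) : Prop :=
  w n ∈ ((Finset.Icc (n + 1 - s) m) \ Gp).image w ∧
  ∀ k ∈ (Finset.Icc
      ((((Finset.Icc (n + 1 - s) m) \ Gp).filter (fun h => w h = w n)).sup id)
      (n - 1)) \ Gp,
    w k ∉ ((Finset.range k) \ Gp).image w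

open Classical in
/-- The ghost-index sets `𝒢^{γ,s}(n)`, defined recursively: `𝒢(0) = ∅` and
`𝒢(n) = 𝒢(n-1) ∪ {m ∈ [0,n-1] \ 𝒢(n-1) : m satisfies (G_n)}`. -/
noncomputable def ghostSet (w : ℕ → V) (s : ℕ) : ℕ → Finset ℕ
  | 0 => ∅
  | n + 1 =>
      ghostSet w s n ∪ (Finset.range (n + 1)).filter
        (fun m => m ∉ ghostSet w s n ∧ ghostCond w s (n + 1) m (ghostSet w s n))

/-- Last visit time to `x` among times `0,…,n`. -/
noncomputable def lastVisit (w : ℕ → V) (x : V) (n : ℕ) : ℕ :=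
  ((Finset.range (n + 1)).filter (fun k => w k = x)).sup id

/-- The Aldous–Broder tree `AB^γ(n)`: vertex set `R^γ([0,n])`, root `γ(n)`, and an
edge `{x, γ(L_x(n-1)+1)}` for every `x ∈ R^γ([0,n-1]) \ {γ(n)}`. -/
noncomputable def ABGraph (w : ℕ → V) (n : ℕ) : SimpleGraph V :=
  SimpleGraph.fromEdgeSet
    {e | ∃ m < n, w m ≠ w n ∧ e = s(w m, w (lastVisit w (w m) (n - 1) + 1))}

/-- Vertex set of the skeleton chain at time `n`: the image of the non-ghost indices. -/
noncomputable def skelVerts (w : ℕ → V) (s n : ℕ) : Set V :=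
  ↑(((Finset.Icc 0 n) \ ghostSet w s n).image w)


section SkeletonProof

variable (w : ℕ → V) (s : ℕ)

lemma ghostSet_succ_spec (n m : ℕ) : m ∈ ghostSet w s (n + 1) ↔ m ∈ ghostSet w s n ∨
    (m < n + 1 ∧ m ∉ ghostSet w s n ∧ ghostCond w s (n + 1) m (ghostSet w s n)) := by
  simp [ghostSet, Finset.mem_union, Finset.mem_filter, Finset.mem_range]

lemma ghostSet_subset_range : ∀ n, ghostSet w s n ⊆ Finset.range n := by
  intro n
  induction n with
  | zero => simp [ghostSet]
  | succ n ih =>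
    intro m hm
    rw [ghostSet_succ_spec] at hm
    rw [Finset.mem_range]
    rcases hm with hm | hm
    · exact Nat.lt_succ_of_lt (Finset.mem_range.mp (ih hm))
    · exact hm.1

lemma self_notMem_ghostSet (n : ℕ) : n ∉ ghostSet w s n := by
  intro h
  simpa using ghostSet_subset_range w s n h

lemma ghostSet_mono (n : ℕ) : ghostSet w s n ⊆ ghostSet w s (n + 1) := by
  intro m hm
  rw [ghostSet_succ_spec]
  exact Or.inl hm

lemma lastVisit_le (x : V) (n : ℕ) : lastVisit w x n ≤ n := by
  apply Finset.sup_le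
  intro b hb
  simp only [Finset.mem_filter, Finset.mem_range] at hb
  exact Nat.lt_succ_iff.mp hb.1

lemma le_lastVisit {x : V} {j n : ℕ} (hj : j ≤ n) (hx : w j = x) : j ≤ lastVisit w x n :=
  Finset.le_sup (f := id) (by simp [Finset.mem_filter, Nat.lt_succ_iff, hj, hx])

lemma w_lastVisit {x : V} {j n : ℕ} (hj : j ≤ n) (hx : w j = x) :
    w (lastVisit w x n) = x := by
  have hne : (((Finset.range (n + 1)).filter (fun k => w k = x))).Nonempty :=
    ⟨j, by simp [Finset.mem_filter, Nat.lt_succ_iff, hj, hx]⟩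
  obtain ⟨b, hb, hsup⟩ := Finset.exists_mem_eq_sup _ hne id
  rw [lastVisit, hsup]
  exact (Finset.mem_filter.mp hb).2

lemma lastVisit_succ {x : V} {n : ℕ} (h : w (n + 1) ≠ x) :
    lastVisit w x (n + 1) = lastVisit w x n := by
  rw [lastVisit, lastVisit, Finset.range_add_one, Finset.filter_insert, if_neg h]

/-- (J): every ghost index is a first visit among non-ghost indices. -/
lemma ghost_first_visit : ∀ n, ∀ k ∈ ghostSet w s n,
    w k ∉ ((Finset.range k) \ ghostSet w s n).image w := by
  intro n
  induction n with
  | zero => simp [ghostSet]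
  | succ n ih =>
    intro k hk
    have hsub : ((Finset.range k) \ ghostSet w s (n + 1)).image w ⊆
        ((Finset.range k) \ ghostSet w s n).image w :=
      Finset.image_subset_image (Finset.sdiff_subset_sdiff le_rfl (ghostSet_mono w s n))
    rw [ghostSet_succ_spec] at hk
    rcases hk with hk | hk
    · exact fun hmem => ih k hk (hsub hmem)
    · obtain ⟨hkr, hkg, hc1, hc2⟩ := hk
      intro hmem
      have hm1 : (((Finset.Icc (n + 1 + 1 - s) k) \ ghostSet w s n).filter
          (fun h => w h = w (n + 1))).sup id ≤ k := by
        apply Finset.sup_le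
        intro b hb
        simp only [Finset.mem_filter, Finset.mem_sdiff, Finset.mem_Icc, id] at hb ⊢
        exact hb.1.1.2
      have hk' : k ∈ (Finset.Icc ((((Finset.Icc (n + 1 + 1 - s) k) \ ghostSet w s n).filter
          (fun h => w h = w (n + 1))).sup id) (n + 1 - 1)) \ ghostSet w s n := by
        simp only [Finset.mem_sdiff, Finset.mem_Icc]
        exact ⟨⟨hm1, by omega⟩, hkg⟩
      exact hc2 k hk' (hsub hmem)

/-- The structure of a nonempty batch of new ghost indices. -/
lemma case3 (n : ℕ) (hA : (ghostSet w s (n + 1) \ ghostSet w s n).Nonempty) :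
    ∃ μ, μ ≤ n ∧ μ ∉ ghostSet w s n ∧ w μ = w (n + 1) ∧
      (∀ t, μ ≤ t → t ≤ n → t ∈ ghostSet w s (n + 1)) ∧
      (∀ t, t ∈ ghostSet w s (n + 1) → t ∈ ghostSet w s n ∨ μ ≤ t) := by
  set Gp := ghostSet w s n with hGp
  set A := ghostSet w s (n + 1) \ Gp with hAdef
  have hmemA : ∀ m, m ∈ A ↔ (m ≤ n ∧ m ∉ Gp ∧ ghostCond w s (n + 1) m Gp) := by
    intro m
    rw [hAdef, Finset.mem_sdiff, ghostSet_succ_spec]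
    constructor
    · rintro ⟨h | h, hg⟩
      · exact absurd h hg
      · exact ⟨Nat.lt_succ_iff.mp h.1, h.2.1, h.2.2⟩
    · rintro ⟨h1, h2, h3⟩
      exact ⟨Or.inr ⟨Nat.lt_succ_of_le h1, h2, h3⟩, h2⟩
  set μ0 := A.min' hA with hμ0
  have hμ0A := A.min'_mem hA
  rw [hmemA] at hμ0A
  obtain ⟨hμ0n, hμ0g, hc1, hc2⟩ := hμ0A
  set F := (((Finset.Icc (n + 1 + 1 - s) μ0) \ Gp).filter (fun h => w h = w (n + 1)))
    with hF
  have hFne : F.Nonempty := by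
    rw [Finset.mem_image] at hc1
    obtain ⟨h, hh, hwh⟩ := hc1
    exact ⟨h, by rw [hF, Finset.mem_filter]; exact ⟨hh, hwh⟩⟩
  obtain ⟨m₁, hm₁F, hsupF⟩ := Finset.exists_mem_eq_sup F hFne id
  simp only [id] at hsupF
  have hm₁props : (n + 1 + 1 - s ≤ m₁ ∧ m₁ ≤ μ0) ∧ m₁ ∉ Gp ∧ w m₁ = w (n + 1) := by
    have h := hm₁F
    rw [hF, Finset.mem_filter, Finset.mem_sdiff, Finset.mem_Icc] at h
    exact ⟨h.1.1, h.1.2, h.2⟩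
  obtain ⟨⟨hm₁lo, hm₁hi⟩, hm₁g, hm₁w⟩ := hm₁props
  rw [hsupF] at hc2
  -- m₁ itself satisfies the ghost condition, hence m₁ ∈ A, hence μ0 ≤ m₁, so m₁ = μ0
  have hm₁A : m₁ ∈ A := by
    rw [hmemA]
    refine ⟨by omega, hm₁g, ?_, ?_⟩
    · rw [Finset.mem_image]
      exact ⟨m₁, by simp only [Finset.mem_sdiff, Finset.mem_Icc]
                    exact ⟨⟨hm₁lo, le_rfl⟩, hm₁g⟩, hm₁w⟩
    · have hsup' : (((Finset.Icc (n + 1 + 1 - s) m₁) \ Gp).filter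
          (fun h => w h = w (n + 1))).sup id = m₁ := by
        apply le_antisymm
        · apply Finset.sup_le
          intro b hb
          simp only [Finset.mem_filter, Finset.mem_sdiff, Finset.mem_Icc, id] at hb ⊢
          exact hb.1.1.2
        · exact Finset.le_sup (f := id)
            (by simp only [Finset.mem_filter, Finset.mem_sdiff, Finset.mem_Icc]
                exact ⟨⟨⟨hm₁lo, le_rfl⟩, hm₁g⟩, hm₁w⟩)
      rw [hsup']
      exact hc2
  have hμ0m₁ : μ0 ≤ m₁ := A.min'_le _ hm₁A
  have hm₁eq : m₁ = μ0 := le_antisymm hm₁hi hμ0m₁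
  rw [hm₁eq] at hm₁w hm₁lo
  refine ⟨μ0, hμ0n, hμ0g, hm₁w, ?_, ?_⟩
  · -- everything in [μ0, n] becomes ghost
    intro t ht1 ht2
    by_cases htg : t ∈ Gp
    · exact ghostSet_mono w s n htg
    · have : t ∈ A := by
        rw [hmemA]
        refine ⟨ht2, htg, ?_, ?_⟩
        · rw [Finset.mem_image]
          exact ⟨μ0, by simp only [Finset.mem_sdiff, Finset.mem_Icc]
                        exact ⟨⟨hm₁lo, ht1⟩, hμ0g⟩, hm₁w⟩
        · intro k hk
          apply hc2 k
          have hle : μ0 ≤ (((Finset.Icc (n + 1 + 1 - s) t) \ Gp).filter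
              (fun h => w h = w (n + 1))).sup id :=
            Finset.le_sup (f := id)
              (by simp only [Finset.mem_filter, Finset.mem_sdiff, Finset.mem_Icc]
                  exact ⟨⟨⟨hm₁lo, ht1⟩, hμ0g⟩, hm₁w⟩)
          simp only [Finset.mem_sdiff, Finset.mem_Icc] at hk ⊢
          rw [hm₁eq]
          exact ⟨⟨le_trans hle hk.1.1, hk.1.2⟩, hk.2⟩
      exact (Finset.mem_sdiff.mp this).1
  · intro t ht
    by_cases htg : t ∈ Gp
    · exact Or.inl htg
    · exact Or.inr (A.min'_le _ (Finset.mem_sdiff.mpr ⟨ht, htg⟩))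

/-- (P⁺): the parent of any non-ghost vertex has a non-ghost witness, and all
indices strictly between the parent index and the witness are ghosts. -/
lemma parent_witness : ∀ n, ∀ j, j ≤ n → j ∉ ghostSet w s n → w j ≠ w n →
    ∃ q, lastVisit w (w j) (n - 1) < q ∧ q ≤ n ∧ q ∉ ghostSet w s n ∧
      w q = w (lastVisit w (w j) (n - 1) + 1) ∧
      ∀ t, lastVisit w (w j) (n - 1) < t → t < q → t ∈ ghostSet w s n := by
  intro n
  induction n with
  | zero =>
    intro j hj _ hjw
    interval_cases j
    exact absurd rfl hjw
  | succ n ih =>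
    intro j hj hjg hjw
    have hjn : j ≤ n := by
      rcases Nat.lt_succ_iff_lt_or_eq.mp (Nat.lt_succ_of_le hj) with h | h
      · exact Nat.lt_succ_iff.mp h
      · exact absurd (by rw [h]) hjw
    have hLsucc : lastVisit w (w j) (n + 1 - 1) = lastVisit w (w j) n := by norm_num
    by_cases hA : (ghostSet w s (n + 1) \ ghostSet w s n).Nonempty
    · -- ghost erasure step
      obtain ⟨μ, hμn, hμg, hμw, hGhost, hMin⟩ := case3 w s n hA
      have hjGp : j ∉ ghostSet w s n := fun h => hjg (ghostSet_mono w s n h)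
      have hjμ : j < μ := by
        by_contra h
        exact hjg (hGhost j (le_of_not_gt h) hjn)
      -- w n ≠ w j
      have hwn : w n ≠ w j := by
        intro heq
        have hnG : n ∈ ghostSet w s (n + 1) := hGhost n hμn le_rfl
        apply ghost_first_visit w s (n + 1) n hnG
        rw [Finset.mem_image]
        exact ⟨j, Finset.mem_sdiff.mpr ⟨Finset.mem_range.mpr (by omega), hjg⟩, heq.symm⟩
      -- the last visit to w j up to time n
      set L := lastVisit w (w j) n with hL
      have hLj : j ≤ L := le_lastVisit w hjn rfl
      have hLn : L ≤ n := lastVisit_le w _ n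
      have hwL : w L = w j := w_lastVisit w hjn rfl
      have hLg' : L ∉ ghostSet w s (n + 1) := by
        intro h
        apply ghost_first_visit w s (n + 1) L h
        rcases lt_or_eq_of_le hLj with hlt | heq
        · rw [Finset.mem_image]
          exact ⟨j, Finset.mem_sdiff.mpr ⟨Finset.mem_range.mpr hlt, hjg⟩, hwL.symm⟩
        · exact absurd (heq ▸ h) hjg
      have hLμ : L < μ := by
        by_contra h
        exact hLg' (hGhost L (le_of_not_gt h) hLn)
      have hn1 : 1 ≤ n := by omega
      have hLold : lastVisit w (w j) n = lastVisit w (w j) (n - 1) := by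
        obtain ⟨m, rfl⟩ : ∃ m, n = m + 1 := ⟨n - 1, by omega⟩
        simp only [Nat.add_sub_cancel]
        exact lastVisit_succ w hwn
      obtain ⟨q, hq1, hq2, hq3, hq4, hq5⟩ := ih j hjn hjGp (fun h => hwn h.symm)
      rw [← hLold] at hq1 hq4 hq5
      by_cases hqμ : q < μ
      · refine ⟨q, ?_, by omega, ?_, ?_, ?_⟩
        · rw [hLsucc]; exact hq1
        · intro h
          rcases hMin q h with h' | h'
          · exact hq3 h'
          · omega
        · rw [hLsucc]; exact hq4
        · intro t ht1 ht2
          rw [hLsucc] at ht1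
          exact ghostSet_mono w s n (hq5 t ht1 ht2)
      · have hμq : μ = q := by
          rcases lt_or_eq_of_le (le_of_not_gt hqμ) with hlt | heq
          · exact absurd (hq5 μ hLμ hlt) hμg
          · exact heq
        refine ⟨n + 1, ?_, le_rfl, self_notMem_ghostSet w s (n + 1), ?_, ?_⟩
        · rw [hLsucc]; omega
        · rw [hLsucc, ← hq4, ← hμq, hμw]
        · intro t ht1 ht2
          rw [hLsucc] at ht1
          have htn : t ≤ n := by omega
          by_cases htμ : t < μ
          · exact ghostSet_mono w s n (hq5 t ht1 (by omega))
          · exact hGhost t (le_of_not_gt htμ) htn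
    · -- no new ghosts
      have hGe : ghostSet w s (n + 1) = ghostSet w s n := by
        apply le_antisymm _ (ghostSet_mono w s n)
        intro m hm
        by_contra hm'
        exact hA ⟨m, Finset.mem_sdiff.mpr ⟨hm, hm'⟩⟩
      rw [hGe] at hjg
      by_cases hx : w j = w n
      · have hLeq : lastVisit w (w j) n = n :=
          le_antisymm (lastVisit_le w _ n) (le_lastVisit w le_rfl hx.symm)
        refine ⟨n + 1, ?_, le_rfl, self_notMem_ghostSet w s (n + 1), ?_, ?_⟩
        · rw [hLsucc, hLeq]; omega
        · rw [hLsucc, hLeq]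
        · intro t ht1 ht2
          rw [hLsucc, hLeq] at ht1
          omega
      · have hn1 : 1 ≤ n := by
          by_contra h
          apply hx
          have : j = 0 ∧ n = 0 := by omega
          rw [this.1, this.2]
        have hLold : lastVisit w (w j) n = lastVisit w (w j) (n - 1) := by
          obtain ⟨m, rfl⟩ : ∃ m, n = m + 1 := ⟨n - 1, by omega⟩
          simp only [Nat.add_sub_cancel]
          exact lastVisit_succ w (fun h => hx h.symm)
        obtain ⟨q, hq1, hq2, hq3, hq4, hq5⟩ := ih j hjn hjg hx
        rw [← hLold] at hq1 hq4 hq5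
        refine ⟨q, ?_, by omega, by rw [hGe]; exact hq3, ?_, ?_⟩
        · rw [hLsucc]; exact hq1
        · rw [hLsucc]; exact hq4
        · intro t ht1 ht2
          rw [hLsucc] at ht1
          rw [hGe]
          exact hq5 t ht1 ht2

end SkeletonProof

/-- Connectedness of the skeleton chain. For any path `γ` on a
finite simple connected graph and any `s ∈ ℕ`, the subgraph of the Aldous–Broder
tree `AB^γ(n)` induced on the vertices of non-ghost indices, rooted at `γ(n)`, is
connected (hence a rooted subtree of `AB^γ(n)`). -/
theorem skeleton_connected
    (G : SimpleGraph V) [DecidableRel G.Adj] (hconn : G.Connected)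
    (w : ℕ → V) (hw : ∀ n, w (n + 1) = w n ∨ G.Adj (w n) (w (n + 1)))
    (s n : ℕ) :
    ((ABGraph w n).induce (skelVerts w s n)).Connected := by
  classical
  have hmem : ∀ j, j ≤ n → j ∉ ghostSet w s n → w j ∈ skelVerts w s n := by
    intro j hj hg
    exact Finset.mem_coe.mpr (Finset.mem_image.mpr
      ⟨j, Finset.mem_sdiff.mpr ⟨Finset.mem_Icc.mpr ⟨Nat.zero_le j, hj⟩, hg⟩, rfl⟩)
  have hroot : w n ∈ skelVerts w s n := hmem n le_rfl (self_notMem_ghostSet w s n)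
  have key : ∀ d j (hj : j ≤ n) (hg : j ∉ ghostSet w s n),
      n - lastVisit w (w j) (n - 1) ≤ d →
      ((ABGraph w n).induce (skelVerts w s n)).Reachable
        ⟨w j, hmem j hj hg⟩ ⟨w n, hroot⟩ := by
    intro d
    induction d with
    | zero =>
      intro j hj hg hd
      have hL : lastVisit w (w j) (n - 1) ≤ n - 1 := lastVisit_le w _ _
      have hn : n = 0 := by omega
      subst hn
      have hj0 : j = 0 := by omega
      subst hj0
      exact SimpleGraph.Reachable.refl _
    | succ d ihd =>
      intro j hj hg hd
      by_cases hx : w j = w n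
      · have hveq : (⟨w j, hmem j hj hg⟩ : skelVerts w s n) = ⟨w n, hroot⟩ :=
          Subtype.ext hx
        rw [hveq]
      · obtain ⟨q, hq1, hq2, hq3, hq4, hq5⟩ := parent_witness w s n j hj hg hx
        set L := lastVisit w (w j) (n - 1) with hL
        have hLn : L ≤ n - 1 := lastVisit_le w _ _
        have hjn : j < n := lt_of_le_of_ne hj (fun h => hx (by rw [h]))
        have hn1 : 1 ≤ n := by omega
        have hadj : (ABGraph w n).Adj (w j) (w q) := by
          rw [ABGraph, SimpleGraph.fromEdgeSet_adj]
          constructor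
          · simp only [Set.mem_setOf_eq]
            exact ⟨j, hjn, hx, by rw [hq4]⟩
          intro heq
          rw [hq4] at heq
          rcases lt_or_eq_of_le (show L + 1 ≤ n by omega) with hlt | heq2
          · have : L + 1 ≤ L := le_lastVisit w (by omega : L + 1 ≤ n - 1) heq.symm
            omega
          · exact hx (by rw [heq, heq2])
        have hadj' : ((ABGraph w n).induce (skelVerts w s n)).Adj
            ⟨w j, hmem j hj hg⟩ ⟨w q, hmem q hq2 hq3⟩ := hadj
        have tail : ((ABGraph w n).induce (skelVerts w s n)).Reachable
            ⟨w q, hmem q hq2 hq3⟩ ⟨w n, hroot⟩ := by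
          by_cases hqn : w q = w n
          · have hveq : (⟨w q, hmem q hq2 hq3⟩ : skelVerts w s n) = ⟨w n, hroot⟩ :=
              Subtype.ext hqn
            rw [hveq]
          · have hqn' : q ≠ n := fun h => hqn (by rw [h])
            have hqn1 : q ≤ n - 1 := by omega
            have hLV : q ≤ lastVisit w (w q) (n - 1) := le_lastVisit w hqn1 rfl
            exact ihd q hq2 hq3 (by omega)
        exact (SimpleGraph.Adj.reachable hadj').trans tail
  have main : ∀ u : ↥(skelVerts w s n),
      ((ABGraph w n).induce (skelVerts w s n)).Reachable u ⟨w n, hroot⟩ := by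
    rintro ⟨x, hx⟩
    obtain ⟨j, hjmem, rfl⟩ := Finset.mem_image.mp (Finset.mem_coe.mp hx)
    obtain ⟨hj, hg⟩ := Finset.mem_sdiff.mp hjmem
    exact key n j (Finset.mem_Icc.mp hj).2 hg (Nat.sub_le _ _)
  rw [SimpleGraph.connected_iff]
  exact ⟨fun u v => (main u).trans (main v).symm, ⟨⟨w n, hroot⟩⟩⟩
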